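/- Let F_n be the friendship graph with center c and n triangles. The visibility polynomial of F_n is V(F_n)(x) = (1+x)^{2n} + x + 2n·x^2 + n·x^3. -/

import Mathlib

open SimpleGraph Polynomial

/-- Two vertices `u` and `v` are `X`-visible in `G` if some shortest `u`–`v` path
has no internal vertex in `X`, i.e. its support meets `X` only possibly in `{u, v}`. -/
def XVisible {V : Type*} (G : SimpleGraph V) (X : Set V) (u v : V) : Prop :=
  ∃ p : G.Walk u v, p.IsPath ∧ p.length = G.dist u v ∧
    ∀ w ∈ p.support, w ∈ X → w = u ∨ w = v

/-- `X` is a mutual-visibility set of `G` if every pair of vertices of `X` is `X`-visible. -/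
def MutualVisibilitySet {V : Type*} (G : SimpleGraph V) (X : Set V) : Prop :=
  ∀ u ∈ X, ∀ v ∈ X, XVisible G X u v

open Classical in
/-- The visibility polynomial: `∑ m_k x^k` where `m_k` is the number of
mutual-visibility sets of cardinality `k`. -/
noncomputable def visPoly {V : Type*} [Fintype V] (G : SimpleGraph V) : Polynomial ℕ :=
  ∑ S ∈ Finset.univ.powerset.filter (fun S : Finset V => MutualVisibilitySet G ↑S),
    Polynomial.X ^ S.card

/-- The wheel graph with rim `cycleGraph m` (on `some`-vertices) and hub `none`. -/
def wheelGraph (m : ℕ) : SimpleGraph (Option (Fin m)) :=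
  SimpleGraph.fromRel (fun u v =>
    (u = none ∧ v ≠ none) ∨
    ∃ i j : Fin m, u = some i ∧ v = some j ∧ (SimpleGraph.cycleGraph m).Adj i j)

/-- The shell graph with path `pathGraph m` (on `some`-vertices) and apex `none`. -/
def shellGraph (m : ℕ) : SimpleGraph (Option (Fin m)) :=
  SimpleGraph.fromRel (fun u v =>
    (u = none ∧ v ≠ none) ∨
    ∃ i j : Fin m, u = some i ∧ v = some j ∧ (SimpleGraph.pathGraph m).Adj i j)

/-- The bow graph: apex `none` joined to two disjoint paths of `a` and `b` vertices. -/
def bowGraph (a b : ℕ) : SimpleGraph (Option (Fin a ⊕ Fin b)) :=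
  SimpleGraph.fromRel (fun u v =>
    (u = none ∧ v ≠ none) ∨
    (∃ i j : Fin a, u = some (Sum.inl i) ∧ v = some (Sum.inl j) ∧ (SimpleGraph.pathGraph a).Adj i j) ∨
    (∃ i j : Fin b, u = some (Sum.inr i) ∧ v = some (Sum.inr j) ∧ (SimpleGraph.pathGraph b).Adj i j))

/-- The friendship graph: center `none`; the `i`-th triangle has the two
noncentral vertices `some (i, 0)` and `some (i, 1)`. -/
def friendshipGraph (n : ℕ) : SimpleGraph (Option (Fin n × Fin 2)) :=
  SimpleGraph.fromRel (fun u v =>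
    (u = none ∧ v ≠ none) ∨
    ∃ (i : Fin n) (x y : Fin 2), u = some (i, x) ∧ v = some (i, y) ∧ x ≠ y)

/-- The helm graph: a copy of the wheel (the `Sum.inl`-vertices) together with a
pendant vertex `Sum.inr k` attached to each rim vertex `Sum.inl (some k)`. -/
def helmGraph (m : ℕ) : SimpleGraph (Option (Fin m) ⊕ Fin m) :=
  SimpleGraph.fromRel (fun u v =>
    (∃ x y : Option (Fin m), u = Sum.inl x ∧ v = Sum.inl y ∧ (wheelGraph m).Adj x y) ∨
    (∃ k : Fin m, u = Sum.inl (some k) ∧ v = Sum.inr k))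

/-- `W` is a `c_Q`-visible set: `W ⊆ V \ Q`, every pair of vertices of `W` is
`Q`-visible, and `{u, w}` is `Q`-visible for all `u ∈ Q`, `w ∈ W`. -/
def CQVisible {V : Type*} (G : SimpleGraph V) (Q W : Set V) : Prop :=
  W ⊆ Qᶜ ∧ (∀ u ∈ W, ∀ v ∈ W, XVisible G Q u v) ∧ (∀ u ∈ Q, ∀ w ∈ W, XVisible G Q u w)

/-- An absolute `c_Q`-visible set: a `c_Q`-visible set for which `Q` is moreover a
mutual-visibility set of `G`. -/
def AbsoluteCQVisible {V : Type*} (G : SimpleGraph V) (Q W : Set V) : Prop :=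
  CQVisible G Q W ∧ MutualVisibilitySet G Q

/-! Two vertices of different triangles are at distance two and the centre is their only common
neighbour, so a set is a mutual-visibility set exactly when it avoids the centre or its
non-central vertices lie in one triangle. The `2 ^ (2 * n)` sets avoiding the centre give
`(1 + X) ^ (2 * n)`; those containing it are `{c}`, `{c, v}` and `{c, a_i, b_i}`, which give
`X + 2 n X ^ 2 + n X ^ 3`. -/

open Finset

section Visibility

variable {V : Type*}

lemma xVisible_refl (G : SimpleGraph V) (X : Set V) (u : V) : XVisible G X u u :=
  ⟨.nil, by simp, by simp, by simp⟩

variable {G : SimpleGraph V} {X : Set V} {u v : V}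

lemma SimpleGraph.Adj.xVisible (h : G.Adj u v) (X : Set V) : XVisible G X u v :=
  ⟨.cons h .nil, by simp [h.ne], (dist_eq_one_iff_adj.mpr h).symm, by simp⟩

lemma xVisible_iff_of_dist_eq_two (h : G.dist u v = 2) :
    XVisible G X u v ↔ ∃ w, G.Adj u w ∧ G.Adj w v ∧ w ∉ X := by
  constructor
  · rintro ⟨p, -, hlen, hX⟩
    rw [h] at hlen
    match p, hlen with
    | .cons (v := w) huw (.cons hwv .nil), _ =>
      refine ⟨w, huw, hwv, fun hw => ?_⟩
      rcases hX w (by simp) hw with rfl | rfl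
      exacts [huw.ne rfl, hwv.ne rfl]
  · rintro ⟨w, huw, hwv, hw⟩
    have huv : u ≠ v := by rintro rfl; simp at h
    refine ⟨.cons huw (.cons hwv .nil), ?_, by simp [h], ?_⟩
    · simp [huw.ne, hwv.ne, huv]
    · simp only [Walk.support_cons, Walk.support_nil, List.mem_cons, List.not_mem_nil]
      rintro w' (rfl | rfl | rfl | h') hw'
      exacts [Or.inl rfl, absurd hw' hw, Or.inr rfl, h'.elim]

end Visibility

section Friendship

variable {n : ℕ} {i j : Fin n} {x y : Fin 2}

@[simp]
lemma friendshipGraph_adj_none_left {v : Option (Fin n × Fin 2)} :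
    (friendshipGraph n).Adj none v ↔ v ≠ none := by
  cases v <;> simp [friendshipGraph]

@[simp]
lemma friendshipGraph_adj_none_right {v : Option (Fin n × Fin 2)} :
    (friendshipGraph n).Adj v none ↔ v ≠ none := by
  rw [adj_comm, friendshipGraph_adj_none_left]

@[simp]
lemma friendshipGraph_adj_some_some :
    (friendshipGraph n).Adj (some (i, x)) (some (j, y)) ↔ i = j ∧ x ≠ y := by
  simp only [friendshipGraph, fromRel_adj]
  grind

lemma friendshipGraph_dist_eq_two (h : i ≠ j) :
    (friendshipGraph n).dist (some (i, x)) (some (j, y)) = 2 := by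
  have hcommon : ((friendshipGraph n).commonNeighbors (some (i, x)) (some (j, y))).Nonempty :=
    ⟨none, by simp [mem_commonNeighbors]⟩
  rw [SimpleGraph.dist, edist_eq_two_iff.mpr ⟨by simp [h], by simp [h], hcommon⟩]
  rfl

lemma friendshipGraph_xVisible_iff (X : Set (Option (Fin n × Fin 2))) (h : i ≠ j) :
    XVisible (friendshipGraph n) X (some (i, x)) (some (j, y)) ↔ none ∉ X := by
  rw [xVisible_iff_of_dist_eq_two (friendshipGraph_dist_eq_two h)]
  constructor
  · rintro ⟨_ | ⟨k, z⟩, hiw, hwj, hw⟩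
    · exact hw
    · simp_all
  · exact fun hX => ⟨none, by simp, by simp, hX⟩

lemma mutualVisibilitySet_friendshipGraph_iff (X : Set (Option (Fin n × Fin 2))) :
    MutualVisibilitySet (friendshipGraph n) X ↔
      none ∉ X ∨ ∀ p, some p ∈ X → ∀ q, some q ∈ X → p.1 = q.1 := by
  constructor
  · intro hX
    by_contra! hcon
    obtain ⟨hnone, ⟨i, x⟩, hp, ⟨j, y⟩, hq, hij⟩ := hcon
    exact (friendshipGraph_xVisible_iff X hij).mp (hX _ hp _ hq) hnone
  · intro hX u hu v hv
    rcases u with _ | ⟨i, x⟩ <;> rcases v with _ | ⟨j, y⟩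
    · exact xVisible_refl _ _ _
    · exact (friendshipGraph_adj_none_left.mpr (by simp)).xVisible X
    · exact (friendshipGraph_adj_none_right.mpr (by simp)).xVisible X
    · by_cases hij : i = j
      · subst hij
        by_cases hxy : x = y
        · subst hxy; exact xVisible_refl _ _ _
        · exact (friendshipGraph_adj_some_some.mpr ⟨rfl, hxy⟩).xVisible X
      · refine (friendshipGraph_xVisible_iff X hij).mpr ?_
        exact hX.resolve_right fun h => hij (h _ hu _ hv)

lemma mutualVisibilitySet_friendshipGraph_image_some (T : Finset (Fin n × Fin 2)) :
    MutualVisibilitySet (friendshipGraph n) ↑(T.image some) :=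
  (mutualVisibilitySet_friendshipGraph_iff _).mpr (.inl (by simp))

lemma mutualVisibilitySet_friendshipGraph_insert_none_iff (T : Finset (Fin n × Fin 2)) :
    MutualVisibilitySet (friendshipGraph n) ↑(insert none (T.image some)) ↔
      ∀ p ∈ T, ∀ q ∈ T, p.1 = q.1 := by
  simp only [mutualVisibilitySet_friendshipGraph_iff, coe_insert, coe_image, Set.mem_insert_iff,
    reduceCtorEq, false_or, (Option.some_injective _).mem_set_image, mem_coe, true_or,
    not_true_eq_false]

end Friendship

section Counting

variable {R : Type*} [CommSemiring R]

lemma Fintype.sum_finset_option {α M : Type*} [Fintype α] [DecidableEq α] [AddCommMonoid M]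
    (f : Finset (Option α) → M) :
    ∑ S, f S =
      ∑ T : Finset α, f (T.image some) + ∑ T : Finset α, f (insert none (T.image some)) := by
  have huniv : (univ : Finset (Option α)) = insert none (univ.image some) := by
    ext (_ | _) <;> simp
  have hinj : Set.InjOn (image some) (univ : Finset (Finset α)) :=
    (image_injective (Option.some_injective α)).injOn
  rw [← powerset_univ, huniv, sum_powerset_insert (by simp), powerset_image, powerset_univ,
    sum_image hinj, sum_image hinj]

lemma Fintype.sum_pow_card (α : Type*) [Fintype α] (a : R) :
    ∑ T : Finset α, a ^ #T = (1 + a) ^ Fintype.card α := by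
  simpa [add_comm] using Fintype.sum_pow_mul_eq_add_pow α a 1

/-- A nonempty subset of `ι × κ` inside a single fibre is `{i} ×ˢ U` for a unique `i` and a
unique nonempty `U`. -/
lemma Fintype.sum_pow_card_of_fst_eq (ι κ : Type*) [Fintype ι] [Fintype κ] [DecidableEq ι]
    [DecidableEq κ] (a : R) :
    ∑ T : Finset (ι × κ) with ∀ p ∈ T, ∀ q ∈ T, p.1 = q.1, a ^ #T =
      1 + Fintype.card ι * ∑ U : Finset κ with U.Nonempty, a ^ #U := by
  set A := univ.filter fun T : Finset (ι × κ) => ∀ p ∈ T, ∀ q ∈ T, p.1 = q.1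
  have hfibres : ∑ T ∈ A.erase ∅, a ^ #T =
      ∑ p ∈ (univ : Finset ι) ×ˢ univ.filter (Finset.Nonempty (α := κ)), a ^ #p.2 := by
    symm
    refine sum_bij (fun p _ => {p.1} ×ˢ p.2) ?_ ?_ ?_ ?_
    · rintro ⟨i, U⟩ hU
      simp_all [A, ← nonempty_iff_ne_empty]
    · rintro ⟨i, U⟩ hU ⟨j, W⟩ - hUW
      obtain ⟨k, hk⟩ : U.Nonempty := by simpa using hU
      have hij : i = j := (mem_product.mp (hUW ▸ mk_mem_product (mem_singleton_self i) hk)).1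
        |> mem_singleton.mp
      subst hij
      simpa using hUW
    · intro T hT
      obtain ⟨hT, hA⟩ := mem_erase.mp hT
      obtain ⟨p, hp⟩ := nonempty_iff_ne_empty.mpr hT
      refine ⟨(p.1, T.image Prod.snd), by simpa using ⟨p, hp⟩, ?_⟩
      ext ⟨j, k⟩
      simp only [A, mem_filter, mem_univ, true_and] at hA
      constructor
      · simp only [mem_product, mem_singleton, mem_image]
        rintro ⟨rfl, q, hq, rfl⟩
        rwa [hA p hp q hq]
      · intro hjk
        simpa [hA p hp _ hjk] using ⟨j, hjk⟩
    · simp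
  have hempty : (∅ : Finset (ι × κ)) ∈ A := by simp [A]
  rw [← add_sum_erase _ _ hempty, hfibres, sum_product]
  simp only [sum_const, card_univ, nsmul_eq_mul, Finset.card_empty, pow_zero]

end Counting

theorem visPoly_friendship (n : ℕ) :
    visPoly (friendshipGraph n) =
      (1 + Polynomial.X) ^ (2 * n) + Polynomial.X +
        Polynomial.C (2 * n) * Polynomial.X ^ 2 +
        Polynomial.C n * Polynomial.X ^ 3 := by
  have hpairs : ∑ U : Finset (Fin 2) with U.Nonempty, (X : ℕ[X]) ^ #U = 2 * X + X ^ 2 := by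
    rw [show ({U : Finset (Fin 2) | U.Nonempty} : Finset _) = {{0}, {1}, univ} by decide,
      sum_insert (by decide), sum_insert (by decide), sum_singleton]
    simp only [card_singleton, card_univ, Fintype.card_fin, pow_one]
    ring
  have hcard (T : Finset (Fin n × Fin 2)) : #(T.image some) = #T :=
    card_image_of_injective _ (Option.some_injective _)
  have hcard_insert (T : Finset (Fin n × Fin 2)) : #(insert none (T.image some)) = #T + 1 := by
    rw [card_insert_of_notMem (by simp), hcard]
  rw [visPoly, powerset_univ, sum_filter, Fintype.sum_finset_option]
  simp only [mutualVisibilitySet_friendshipGraph_image_some,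
    mutualVisibilitySet_friendshipGraph_insert_none_iff, if_true, ← sum_filter, hcard,
    hcard_insert, pow_succ]
  rw [← sum_mul, Fintype.sum_pow_card, Fintype.sum_pow_card_of_fst_eq, hpairs]
  simp only [Fintype.card_prod, Fintype.card_fin, map_mul, map_ofNat, eq_natCast]
  ring
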